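/- arXiv:2307.12766 — 2 statements merged into one kernel-verified Lean document; each statement's English description precedes it below -/
import Mathlib

section
/- Let J(α,β) = (1/√3)(α-2β, 2α-β) and G((α,β),(γ,δ)) = (2/(3√3))·(-α×γ - α×δ + γ×β + 2β×δ, -2α×γ + α×δ - γ×β + β×δ) on sl₂ℝ × sl₂ℝ, with α×β = (1/2)(αβ-βα). Then G(X, JY) + J·G(X,Y) = 0 and G(JX, JY) = -G(X,Y) for all X, Y. -/
open Matrix

noncomputable def slCross (α β : Matrix (Fin 2) (Fin 2) ℝ) : Matrix (Fin 2) (Fin 2) ℝ :=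
  (1/2 : ℝ) • (α * β - β * α)

noncomputable def Jmap (z : Matrix (Fin 2) (Fin 2) ℝ × Matrix (Fin 2) (Fin 2) ℝ) :
    Matrix (Fin 2) (Fin 2) ℝ × Matrix (Fin 2) (Fin 2) ℝ :=
  (Real.sqrt 3)⁻¹ • (z.1 - 2 • z.2, 2 • z.1 - z.2)

def Pmap (z : Matrix (Fin 2) (Fin 2) ℝ × Matrix (Fin 2) (Fin 2) ℝ) :
    Matrix (Fin 2) (Fin 2) ℝ × Matrix (Fin 2) (Fin 2) ℝ :=
  (z.2, z.1)

/-- The pointwise model of the tensor G = ∇J on the nearly Kähler SL₂ℝ × SL₂ℝ. -/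
noncomputable def Gmap (X Y : Matrix (Fin 2) (Fin 2) ℝ × Matrix (Fin 2) (Fin 2) ℝ) :
    Matrix (Fin 2) (Fin 2) ℝ × Matrix (Fin 2) (Fin 2) ℝ :=
  (2 / (3 * Real.sqrt 3)) •
    (-slCross X.1 Y.1 - slCross X.1 Y.2 + slCross Y.1 X.2 + 2 • slCross X.2 Y.2,
     -(2 • slCross X.1 Y.1) + slCross X.1 Y.2 - slCross Y.1 X.2 + slCross X.2 Y.2)

set_option maxHeartbeats 1000000 in
theorem Gmap_J_relations
    (X Y : Matrix (Fin 2) (Fin 2) ℝ × Matrix (Fin 2) (Fin 2) ℝ) :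
    Gmap X (Jmap Y) + Jmap (Gmap X Y) = 0 ∧
    Gmap (Jmap X) (Jmap Y) = -Gmap X Y := by
  have hs : Real.sqrt 3 * Real.sqrt 3 = 3 := Real.mul_self_sqrt (by norm_num)
  have hs0 : Real.sqrt 3 ≠ 0 := by positivity
  have hinv : (Real.sqrt 3)⁻¹ = Real.sqrt 3 / 3 := by
    field_simp
    rw [sq, hs]
  have hdiv : 2 / (3 * Real.sqrt 3) = 2 * Real.sqrt 3 / 9 := by
    rw [div_eq_div_iff (by positivity) (by norm_num)]
    nlinarith [hs]
  simp only [Gmap, Jmap, slCross, Prod.smul_mk, Prod.mk_add_mk, Prod.neg_mk, Prod.mk.injEq,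
    hinv, hdiv, Prod.fst, Prod.snd, Prod.ext_iff, Prod.fst_zero, Prod.snd_zero, mul_sub, sub_mul, mul_add, add_mul,
    Matrix.smul_mul, Matrix.mul_smul, smul_sub, smul_add, smul_smul]
  have h2 : Real.sqrt 3 ^ 2 = 3 := by rw [sq]; exact hs
  have h3 : Real.sqrt 3 ^ 3 = 3 * Real.sqrt 3 := by rw [pow_succ, h2]
  refine ⟨⟨?_, ?_⟩, ?_, ?_⟩ <;>
  · match_scalars <;> (ring_nf; try (simp only [h2, h3]; ring_nf))
end

section
/- Let P(α,β) = (β,α) and G as in the nearly Kähler model: G((α,β),(γ,δ)) = (2/(3√3))·(-α×γ - α×δ + γ×β + 2β×δ, -2α×γ + α×δ - γ×β + β×δ) with α×β = (1/2)(αβ-βα). Then P·G(X,Y) + G(PX, PY) = 0 for all X, Y ∈ sl₂ℝ × sl₂ℝ. -/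
open Matrix

theorem Gmap_P_relation
    (X Y : Matrix (Fin 2) (Fin 2) ℝ × Matrix (Fin 2) (Fin 2) ℝ) :
    Pmap (Gmap X Y) + Gmap (Pmap X) (Pmap Y) = 0 := by
  simp only [Gmap, Pmap, slCross, Prod.smul_mk, Prod.mk_add_mk, Prod.ext_iff, Prod.fst_zero, Prod.snd_zero]
  constructor <;> module
end
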